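/- arXiv:1502.00768 — 2 statements merged into one kernel-verified Lean document; each statement's English description precedes it below -/
import Mathlib

section
/- Let t ≥ s > 0 be real numbers, q a positive integer, f = Σ a_n x^n an analytic function on the closed p-adic ball of radius t in a complete subfield F of ℂ_p, and Γ ⊆ \bar B_F(s) a finite set of cardinality l ≥ 2. Set δ = inf{|γ−γ'|_p : γ ≠ γ' in Γ} and μ = sup{|f^{(m)}(γ)|_p : 0 ≤ m ≤ q−1, γ ∈ Γ}, and r_p = p^{−1/(p−1)}. If δ ≤ 1, then |f|_s ≤ max{ (s/t)^{ql} |f|_t , μ (s/δ)^{ql−1} r_p^{−(q−1)} }, where |f|_r = sup_n |a_n|_p r^n. -/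
open Filter

/-- The Gauss norm `|f|_r = sup_n |a_n| r^n` of a power series with coefficients `a`. -/
noncomputable def gaussNorm {F : Type*} [NormedField F] (a : ℕ → F) (r : ℝ) : ℝ :=
  ⨆ n : ℕ, ‖a n‖ * r ^ n

/-- The `m`-th derivative `f^{(m)}(γ) = ∑_n ((n+m)!/n!) a_{n+m} γ^n` of the power series with
coefficients `a`, evaluated at `γ`. -/
noncomputable def pseriesDeriv {F : Type*} [NormedField F] (a : ℕ → F) (m : ℕ) (γ : F) : F :=
  ∑' n : ℕ, ((n + m).descFactorial m : F) * a (n + m) * γ ^ n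

/-!
List each point of `Γ` `q` times as nodes `x₀, …, x_{N-1}`, `N = q l`, and form the divided
differences `f[x_i, …, x_{i+j}]`, built from iterated difference quotients
`(g y - g γ) / (y - γ)` of power series so that repeated nodes are allowed. The Newton expansion
`f = ∑_{j<N} f[x₀, …, x_j] ∏_{k<j} (X - x_k) + ∏_{k<N} (X - x_k) g`, where `|X - x_k|_s ≤ s`
and `|g|_t ≤ |f|_t / t^N`, bounds `|f|_s` by the maximum of `(s/t)^N |f|_t` and the
`s^j |f[x₀, …, x_j]|`.

A divided difference whose first and last nodes coincide has all its nodes equal to some `γ ∈ Γ`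
and is the Hasse derivative `f^{(j)}(γ) / j!` with `j < q`; Legendre's formula gives
`|j!|⁻¹ ≤ r_p^{-(q-1)}`. Any other one satisfies
`(x_{i+j} - x_i) f[x_i, …, x_{i+j}] = f[x_{i+1}, …, x_{i+j}] - f[x_i, …, x_{i+j-1}]` with
`|x_{i+j} - x_i| ≥ δ`, so by induction and the ultrametric inequality
`δ^j |f[x_i, …, x_{i+j}]| ≤ μ r_p^{-(q-1)}`. Finally `s^j ≤ δ^j (s/δ)^{N-1}` as `δ ≤ s`.
-/

open Topology IsUltrametricDist

theorem norm_sub_le_max {E : Type*} [SeminormedAddCommGroup E] [IsUltrametricDist E] (x y : E) :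
    ‖x - y‖ ≤ max ‖x‖ ‖y‖ := by
  simpa [sub_eq_add_neg] using norm_add_le_max x (-y)

theorem summable_of_norm_le_comp {E ι : Type*} [NormedAddCommGroup E] [IsUltrametricDist E]
    [CompleteSpace E] {g : ι → E} {w : ℕ → ℝ} {φ : ι → ℕ} (hw : Tendsto w atTop (𝓝 0))
    (hφ : Tendsto φ cofinite atTop) (hg : ∀ i, ‖g i‖ ≤ w (φ i)) : Summable g :=
  NonarchimedeanAddGroup.summable_of_tendsto_cofinite_zero <| squeeze_zero_norm hg (hw.comp hφ)

theorem tendsto_fst_add_snd_cofinite_atTop :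
    Tendsto (fun p : ℕ × ℕ => p.1 + p.2) cofinite atTop := by
  refine tendsto_atTop.2 fun K => eventually_cofinite.2 <|
    ((Set.finite_Iio K).prod (Set.finite_Iio K)).subset fun p hp => ?_
  simp only [Set.mem_ofPred_eq, not_le] at hp
  exact ⟨by simp only [Set.mem_Iio]; omega, by simp only [Set.mem_Iio]; omega⟩

open Finset in
theorem tsum_prod_eq_tsum_sum_antidiagonal {E : Type*} [AddCommGroup E] [UniformSpace E]
    [IsUniformAddGroup E] [CompleteSpace E] [T0Space E] {f : ℕ × ℕ → E} (hf : Summable f) :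
    ∑' p, f p = ∑' n, ∑ p ∈ antidiagonal n, f p := by
  rw [← HasAntidiagonal.sigmaAntidiagonalEquivProd.tsum_eq f]
  exact (HasAntidiagonal.sigmaAntidiagonalEquivProd.summable_iff.2 hf).tsum_sigma.trans
    (tsum_congr fun n => tsum_subtype _ f)

section FiniteExtrema

variable {E ι : Type*} [SeminormedAddCommGroup E]

theorem exists_norm_sub_eq_sInf {Γ : Finset E} (hΓ : 2 ≤ Γ.card) :
    ∃ γ ∈ Γ, ∃ γ' ∈ Γ, γ ≠ γ' ∧
      sInf {x : ℝ | ∃ γ ∈ Γ, ∃ γ' ∈ Γ, γ ≠ γ' ∧ x = ‖γ - γ'‖} = ‖γ - γ'‖ := by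
  set S := {x : ℝ | ∃ γ ∈ Γ, ∃ γ' ∈ Γ, γ ≠ γ' ∧ x = ‖γ - γ'‖}
  obtain ⟨γ, hγ, γ', hγ', hne⟩ := Finset.one_lt_card.1 hΓ
  have hS : S.Nonempty := ⟨_, γ, hγ, γ', hγ', hne, rfl⟩
  have hfin : S.Finite := by
    refine ((Γ.finite_toSet.prod Γ.finite_toSet).image fun p => ‖p.1 - p.2‖).subset ?_
    rintro _ ⟨γ, hγ, γ', hγ', -, rfl⟩
    exact ⟨(γ, γ'), ⟨hγ, hγ'⟩, rfl⟩
  obtain ⟨γ, hγ, γ', hγ', hne, h⟩ := hS.csInf_mem hfin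
  exact ⟨γ, hγ, γ', hγ', hne, h⟩

theorem sInf_norm_sub_le {Γ : Finset E} {γ γ' : E} (hγ : γ ∈ Γ) (hγ' : γ' ∈ Γ) (hne : γ ≠ γ') :
    sInf {x : ℝ | ∃ γ ∈ Γ, ∃ γ' ∈ Γ, γ ≠ γ' ∧ x = ‖γ - γ'‖} ≤ ‖γ - γ'‖ :=
  csInf_le ⟨0, by rintro _ ⟨_, _, _, _, _, rfl⟩; exact norm_nonneg _⟩ ⟨γ, hγ, γ', hγ', hne, rfl⟩

theorem le_sSup_of_lt_of_mem (g : ℕ → ι → ℝ) {q m : ℕ} {Γ : Finset ι} (hm : m < q) {γ : ι}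
    (hγ : γ ∈ Γ) : g m γ ≤ sSup {x : ℝ | ∃ m, m < q ∧ ∃ γ ∈ Γ, x = g m γ} := by
  refine le_csSup (Set.Finite.bddAbove ?_) ⟨m, hm, γ, hγ, rfl⟩
  refine (((Set.finite_Iio q).prod Γ.finite_toSet).image fun p => g p.1 p.2).subset ?_
  rintro _ ⟨m, hm, γ, hγ, rfl⟩
  exact ⟨(m, γ), ⟨hm, hγ⟩, rfl⟩

end FiniteExtrema

section Nodes

variable {α : Type*}

def blockNodes (L : List α) (q : ℕ) (d : α) (i : ℕ) : α := L.getD (i / q) d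

theorem blockNodes_mem {L : List α} {d : α} (hd : d ∈ L) (q i : ℕ) : blockNodes L q d i ∈ L := by
  unfold blockNodes
  by_cases h : i / q < L.length
  · rw [List.getD_eq_getElem _ _ h]
    exact L.getElem_mem h
  · rwa [List.getD_eq_default _ _ (not_lt.1 h)]

theorem blockNodes_window {L : List α} (hL : L.Nodup) {q : ℕ} (hq : 0 < q) {d : α} {i j : ℕ}
    (hij : i + j < q * L.length) (h : blockNodes L q d (i + j) = blockNodes L q d i) :
    j < q ∧ ∀ k ≤ j, blockNodes L q d (i + k) = blockNodes L q d i := by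
  have hlt (k : ℕ) (hk : k ≤ j) : (i + k) / q < L.length := Nat.div_lt_of_lt_mul (by omega)
  have hdiv : (i + j) / q = i / q := by
    unfold blockNodes at h
    rw [List.getD_eq_getElem _ _ (hlt j le_rfl),
      List.getD_eq_getElem _ _ (by simpa using hlt 0 (Nat.zero_le j))] at h
    exact hL.getElem_inj_iff.1 h
  have hconst (k : ℕ) (hk : k ≤ j) : (i + k) / q = i / q :=
    le_antisymm (hdiv ▸ Nat.div_le_div_right (by omega)) (Nat.div_le_div_right (by omega))
  refine ⟨?_, fun k hk => by unfold blockNodes; rw [hconst k hk]⟩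
  by_contra hjq
  have := Nat.div_le_div_right (c := q) (show i + q ≤ i + j by omega)
  rw [Nat.add_div_right i hq, hdiv] at this
  omega

end Nodes

section PowerSeries

variable {F : Type*} [NormedField F]

/-- In a complete ultrametric field this says that `∑ b n X^n` converges on the closed ball of
radius `t`. -/
def DecaysAt (t : ℝ) (b : ℕ → F) : Prop := Tendsto (fun n => ‖b n‖ * t ^ n) atTop (𝓝 0)

noncomputable def evalSeries (b : ℕ → F) (y : F) : F := ∑' n, b n * y ^ n

/-- Coefficients of `dslope f γ`, i.e. of `(f y - f γ) / (y - γ)`, where `f = ∑ b n X^n`. -/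
noncomputable def coeffDslope (γ : F) (b : ℕ → F) (k : ℕ) : F := ∑' n, b (n + (k + 1)) * γ ^ n

/-- Coefficients of `(X - γ) * c + v`. -/
def mulXSubAdd (γ : F) (c : ℕ → F) (v : F) : ℕ → F
  | 0 => v - γ * c 0
  | n + 1 => c n - γ * c (n + 1)

/-- The value at `γ` of the `j`-th Hasse derivative `f⁽ʲ⁾ / j!` of `f = ∑ b n X^n`. -/
noncomputable def hasseEval (j : ℕ) (b : ℕ → F) (γ : F) : F :=
  ∑' n, ((n + j).choose j : F) * b (n + j) * γ ^ n

/-- `coeffDivDiff a x i j` are the coefficients of `y ↦ f[x i, …, x (i + j - 1), y]`. -/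
noncomputable def coeffDivDiff (a x : ℕ → F) (i : ℕ) : ℕ → ℕ → F
  | 0 => a
  | j + 1 => coeffDslope (x (i + j)) (coeffDivDiff a x i j)

/-- The divided difference `f[x i, …, x (i + j)]`, with repeated nodes allowed. -/
noncomputable def divDiff (a x : ℕ → F) (i j : ℕ) : F :=
  evalSeries (coeffDivDiff a x i j) (x (i + j))

variable {p : ℕ} {t s G B : ℝ} {a b c x : ℕ → F} {y γ α β v : F}

theorem DecaysAt.shift (ht : 0 < t) (hb : DecaysAt t b) (k : ℕ) :
    Tendsto (fun n => ‖b (n + k)‖ * t ^ n) atTop (𝓝 0) := by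
  have h := (hb.comp (tendsto_add_atTop_nat k)).div_const (t ^ k)
  rw [zero_div] at h
  refine h.congr fun n => ?_
  simp only [Function.comp_apply, pow_add]
  field_simp

theorem evalSeries_mulXSubAdd (hc : Summable fun n => c n * y ^ n) :
    evalSeries (mulXSubAdd γ c v) y = v + (y - γ) * evalSeries c y := by
  have htail : HasSum (fun n => mulXSubAdd γ c v (n + 1) * y ^ (n + 1))
      (v + (y - γ) * evalSeries c y - ∑ i ∈ Finset.range 1, mulXSubAdd γ c v i * y ^ i) := by
    rw [show v + (y - γ) * evalSeries c y - ∑ i ∈ Finset.range 1, mulXSubAdd γ c v i * y ^ i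
      = y * evalSeries c y - γ * (evalSeries c y - c 0) by simp [mulXSubAdd]; ring]
    have h := (hc.hasSum.mul_left y).sub (((hasSum_nat_add_iff' 1).2 hc.hasSum).mul_left γ)
    simp only [Finset.range_one, Finset.sum_singleton, pow_zero, mul_one] at h
    exact h.congr_fun fun n => by simp only [mulXSubAdd, pow_succ]; ring
  exact ((hasSum_nat_add_iff' 1).1 htail).tsum_eq

theorem pseriesDeriv_eq_factorial_mul_hasseEval (a : ℕ → F) (m : ℕ) (γ : F) :
    pseriesDeriv a m γ = (m.factorial : F) * hasseEval m a γ := by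
  rw [pseriesDeriv, hasseEval, ← tsum_mul_left]
  refine tsum_congr fun n => ?_
  rw [Nat.descFactorial_eq_factorial_mul_choose]
  push_cast
  ring

theorem coeffDivDiff_eq_iterate {i j : ℕ} (h : ∀ k < j, x (i + k) = γ) :
    coeffDivDiff a x i j = (coeffDslope γ)^[j] a := by
  induction j with
  | zero => rfl
  | succ j ih =>
    rw [coeffDivDiff, h j j.lt_succ_self, ih fun k hk => h k (by omega),
      Function.iterate_succ_apply']

variable [IsUltrametricDist F]

theorem norm_coeffDslope_mul_pow_le (ht : 0 < t) (hγ : ‖γ‖ ≤ t) {C : ℝ} (hC : 0 ≤ C) (k : ℕ)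
    (hb : ∀ n, k < n → ‖b n‖ * t ^ n ≤ C) : ‖coeffDslope γ b k‖ * t ^ (k + 1) ≤ C := by
  rw [← le_div_iff₀ (by positivity)]
  refine norm_tsum_le_of_forall_le_of_nonneg (by positivity) fun n => ?_
  rw [le_div_iff₀ (by positivity), norm_mul, norm_pow]
  calc ‖b (n + (k + 1))‖ * ‖γ‖ ^ n * t ^ (k + 1)
      ≤ ‖b (n + (k + 1))‖ * t ^ n * t ^ (k + 1) := by gcongr
    _ = ‖b (n + (k + 1))‖ * t ^ (n + (k + 1)) := by ring
    _ ≤ C := hb _ (by omega)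

theorem decaysAt_coeffDslope (ht : 0 < t) (hb : DecaysAt t b) (hγ : ‖γ‖ ≤ t) :
    DecaysAt t (coeffDslope γ b) := by
  rw [DecaysAt, Metric.tendsto_atTop] at hb ⊢
  intro ε hε
  obtain ⟨K, hK⟩ := hb (ε * t / 2) (by positivity)
  refine ⟨K, fun k hk => ?_⟩
  have h := norm_coeffDslope_mul_pow_le (b := b) ht hγ (by positivity) k fun n hn =>
    (le_abs_self _).trans (Real.dist_0_eq_abs (‖b n‖ * t ^ n) ▸ hK n (by omega)).le
  rw [Real.dist_0_eq_abs, abs_of_nonneg (by positivity)]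
  rw [pow_succ, ← mul_assoc] at h
  nlinarith

theorem decaysAt_coeffDivDiff (ht : 0 < t) (ha : DecaysAt t a) (hx : ∀ i, ‖x i‖ ≤ t) (i j : ℕ) :
    DecaysAt t (coeffDivDiff a x i j) := by
  induction j with
  | zero => exact ha
  | succ j ih => exact decaysAt_coeffDslope ht ih (hx _)

theorem norm_mulXSubAdd_mul_pow_le (hs : 0 ≤ s) (hγ : ‖γ‖ ≤ s) {k : ℕ}
    (hc : ∀ n, ‖c n‖ * s ^ (n + k + 1) ≤ B) (hv : ‖v‖ * s ^ k ≤ B) (n : ℕ) :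
    ‖mulXSubAdd γ c v n‖ * s ^ (n + k) ≤ B := by
  have hsub (u w : F) (m : ℕ) (hu : ‖u‖ * s ^ m ≤ B) (hw : ‖w‖ * s ^ m ≤ B) :
      ‖u - w‖ * s ^ m ≤ B :=
    (mul_le_mul_of_nonneg_right (norm_sub_le_max u w) (by positivity)).trans
      ((max_mul_of_nonneg _ _ (by positivity)).trans_le (max_le hu hw))
  have hγc (m : ℕ) : ‖γ * c m‖ * s ^ (m + k) ≤ B :=
    calc ‖γ * c m‖ * s ^ (m + k) ≤ s * ‖c m‖ * s ^ (m + k) := by rw [norm_mul]; gcongr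
      _ = ‖c m‖ * s ^ (m + k + 1) := by ring
      _ ≤ B := hc m
  cases n with
  | zero => exact hsub _ _ _ (by simpa using hv) (hγc 0)
  | succ n => exact hsub _ _ _ (by simpa [Nat.add_right_comm n 1 k] using hc n) (hγc (n + 1))

theorem norm_coeffDivDiff_mul_pow_le (ht : 0 < t) (hx : ∀ i, ‖x i‖ ≤ t)
    (hG : ∀ n, ‖a n‖ * t ^ n ≤ G) (i j n : ℕ) :
    ‖coeffDivDiff a x i j n‖ * t ^ (n + j) ≤ G := by
  have hG0 : 0 ≤ G := (by positivity : 0 ≤ ‖a 0‖ * t ^ 0).trans (hG 0)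
  induction j generalizing n with
  | zero => exact hG n
  | succ j ih =>
    have h := norm_coeffDslope_mul_pow_le (b := coeffDivDiff a x i j) ht (hx (i + j))
      (div_nonneg hG0 (pow_nonneg ht.le j)) n fun m _ => by
        rw [le_div_iff₀ (by positivity), mul_assoc, ← pow_add]; exact ih m
    calc ‖coeffDivDiff a x i (j + 1) n‖ * t ^ (n + (j + 1))
        = ‖coeffDslope (x (i + j)) (coeffDivDiff a x i j) n‖ * t ^ (n + 1) * t ^ j := by
          rw [coeffDivDiff]; ring
      _ ≤ G / t ^ j * t ^ j := by gcongr
      _ = G := div_mul_cancel₀ G (by positivity)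

theorem norm_natCast_eq_one_of_not_dvd (hp : p.Prime) (hpF : ‖(p : F)‖ < 1) {n : ℕ}
    (hn : ¬p ∣ n) : ‖(n : F)‖ = 1 := by
  obtain ⟨u, v, huv⟩ := Nat.isCoprime_iff_coprime.2 ((Nat.Prime.coprime_iff_not_dvd hp).2 hn)
  have h1 : (u : F) * p + (v : F) * n = 1 := by exact_mod_cast congrArg (Int.cast : ℤ → F) huv
  have h : 1 ≤ max ‖(p : F)‖ ‖(n : F)‖ :=
    calc (1 : ℝ) = ‖(u : F) * p + (v : F) * n‖ := by rw [h1, norm_one]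
      _ ≤ max ‖(u : F) * p‖ ‖(v : F) * n‖ := norm_add_le_max _ _
      _ ≤ max ‖(p : F)‖ ‖(n : F)‖ := by
        rw [norm_mul, norm_mul]
        exact max_le_max (mul_le_of_le_one_left (norm_nonneg _) (norm_intCast_le_one F u))
          (mul_le_of_le_one_left (norm_nonneg _) (norm_intCast_le_one F v))
  refine le_antisymm (norm_natCast_le_one F n) ?_
  rcases le_max_iff.1 h with h | h
  · linarith
  · exact h

theorem norm_natCast_eq_inv_pow_padicValNat (hp : p.Prime) (hpF : ‖(p : F)‖ = (p : ℝ)⁻¹)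
    {n : ℕ} (hn : n ≠ 0) : ‖(n : F)‖ = ((p : ℝ) ^ padicValNat p n)⁻¹ := by
  have := Fact.mk hp
  obtain ⟨e, u, hu, rfl⟩ := Nat.exists_eq_pow_mul_and_not_dvd hn p hp.one_lt.ne'
  have hu0 : u ≠ 0 := by rintro rfl; exact hu (dvd_zero p)
  have hp1 : ‖(p : F)‖ < 1 := hpF ▸ inv_lt_one_of_one_lt₀ (by exact_mod_cast hp.one_lt)
  rw [padicValNat.mul (pow_ne_zero _ hp.ne_zero) hu0, padicValNat.prime_pow,
    padicValNat.eq_zero_of_not_dvd hu, add_zero, Nat.cast_mul, Nat.cast_pow, norm_mul, norm_pow,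
    hpF, norm_natCast_eq_one_of_not_dvd hp hp1 hu, mul_one, inv_pow]

theorem inv_norm_factorial_le (hp : p.Prime) (hpF : ‖(p : F)‖ = (p : ℝ)⁻¹) {m q : ℕ}
    (hm : m < q) :
    ‖(m.factorial : F)‖⁻¹ ≤ (((p : ℝ) ^ (-(1 : ℝ) / ((p : ℝ) - 1)))⁻¹) ^ (q - 1) := by
  have := Fact.mk hp
  have hp1 : (1 : ℝ) < p := by exact_mod_cast hp.one_lt
  set r := (p : ℝ) ^ (1 / ((p : ℝ) - 1))
  have hr : ((p : ℝ) ^ (-(1 : ℝ) / ((p : ℝ) - 1)))⁻¹ = r := by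
    rw [neg_div, Real.rpow_neg (by positivity), inv_inv]
  have hr1 : 1 ≤ r := Real.one_le_rpow hp1.le (one_div_nonneg.2 (by linarith))
  have hrp : r ^ (p - 1) = p := by
    rw [← Real.rpow_natCast, ← Real.rpow_mul (by positivity), Nat.cast_sub hp.one_le,
      Nat.cast_one, one_div_mul_cancel (by linarith), Real.rpow_one]
  -- Legendre's formula: `(p - 1) * v_p(m!) = m - s_p(m)`.
  have hv : (p - 1) * padicValNat p m.factorial ≤ q - 1 := by
    have := sub_one_mul_padicValNat_factorial (p := p) m
    omega
  rw [norm_natCast_eq_inv_pow_padicValNat hp hpF m.factorial_ne_zero, inv_inv, hr, ← hrp,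
    ← pow_mul]
  exact pow_le_pow_right₀ hr1 hv

theorem norm_hasseEval_le (hp : p.Prime) (hpF : ‖(p : F)‖ = (p : ℝ)⁻¹) {j q : ℕ} (hj : j < q)
    (a : ℕ → F) (γ : F) :
    ‖hasseEval j a γ‖
      ≤ ‖pseriesDeriv a j γ‖ * (((p : ℝ) ^ (-(1 : ℝ) / ((p : ℝ) - 1)))⁻¹) ^ (q - 1) := by
  have hfac : 0 < ‖(j.factorial : F)‖ := by
    rw [norm_natCast_eq_inv_pow_padicValNat hp hpF j.factorial_ne_zero]
    exact inv_pos.2 (pow_pos (by exact_mod_cast hp.pos) _)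
  rw [pseriesDeriv_eq_factorial_mul_hasseEval, norm_mul, mul_comm ‖(j.factorial : F)‖, mul_assoc]
  refine le_mul_of_one_le_right (norm_nonneg _) ?_
  rw [← inv_mul_le_iff₀ hfac, mul_one]
  exact inv_norm_factorial_le hp hpF hj

variable [CompleteSpace F]

theorem DecaysAt.summable_shift (ht : 0 < t) (hb : DecaysAt t b) (hy : ‖y‖ ≤ t) (k : ℕ) :
    Summable fun n => b (n + k) * y ^ n := by
  refine summable_of_norm_le_comp (hb.shift ht k) (by rw [Nat.cofinite_eq_atTop]; exact tendsto_id)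
    fun n => ?_
  rw [norm_mul, norm_pow]
  exact mul_le_mul_of_nonneg_left (pow_le_pow_left₀ (norm_nonneg y) hy n) (norm_nonneg _)

theorem DecaysAt.summable (ht : 0 < t) (hb : DecaysAt t b) (hy : ‖y‖ ≤ t) :
    Summable fun n => b n * y ^ n := by
  simpa using hb.summable_shift ht hy 0

theorem mulXSubAdd_coeffDslope (ht : 0 < t) (hb : DecaysAt t b) (hγ : ‖γ‖ ≤ t) :
    mulXSubAdd γ (coeffDslope γ b) (evalSeries b γ) = b := by
  have hshift (k : ℕ) : ∑' n, b (n + k) * γ ^ n = b k + γ * coeffDslope γ b k := by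
    rw [(hb.summable_shift ht hγ k).tsum_eq_zero_add, coeffDslope, ← tsum_mul_left]
    simp only [zero_add, pow_zero, mul_one, pow_succ]
    congr 1
    exact tsum_congr fun n => by rw [show n + 1 + k = n + (k + 1) by omega]; ring
  funext n
  cases n with
  | zero => simpa [mulXSubAdd, evalSeries] using (eq_sub_of_add_eq (hshift 0).symm).symm
  | succ n => exact (eq_sub_of_add_eq (hshift (n + 1)).symm).symm

theorem evalSeries_sub_evalSeries (ht : 0 < t) (hb : DecaysAt t b) (hγ : ‖γ‖ ≤ t)
    (hy : ‖y‖ ≤ t) :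
    evalSeries b y - evalSeries b γ = (y - γ) * evalSeries (coeffDslope γ b) y := by
  have h := evalSeries_mulXSubAdd (γ := γ) (v := evalSeries b γ)
    ((decaysAt_coeffDslope ht hb hγ).summable ht hy)
  rw [mulXSubAdd_coeffDslope ht hb hγ] at h
  rw [h, add_sub_cancel_left]

theorem evalSeries_coeffDslope_comm (ht : 0 < t) (hb : DecaysAt t b) (hγ : ‖γ‖ ≤ t)
    (hy : ‖y‖ ≤ t) : evalSeries (coeffDslope γ b) y = evalSeries (coeffDslope y b) γ := by
  rcases eq_or_ne y γ with rfl | hne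
  · rfl
  refine mul_left_cancel₀ (sub_ne_zero.2 hne) ?_
  rw [← evalSeries_sub_evalSeries ht hb hγ hy, ← neg_sub γ y, neg_mul,
    ← evalSeries_sub_evalSeries ht hb hy hγ, neg_sub]

theorem summable_prod_mul_shift {e : ℕ × ℕ → F} (he : ∀ p, ‖e p‖ ≤ 1) (ht : 0 < t)
    (hb : DecaysAt t b) (hα : ‖α‖ ≤ t) (hβ : ‖β‖ ≤ t) (k : ℕ) :
    Summable fun p : ℕ × ℕ => e p * b (p.1 + p.2 + k) * α ^ p.1 * β ^ p.2 := by
  refine summable_of_norm_le_comp (hb.shift ht k) tendsto_fst_add_snd_cofinite_atTop fun p => ?_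
  simp only [norm_mul, norm_pow]
  calc ‖e p‖ * ‖b (p.1 + p.2 + k)‖ * ‖α‖ ^ p.1 * ‖β‖ ^ p.2
      ≤ 1 * ‖b (p.1 + p.2 + k)‖ * t ^ p.1 * t ^ p.2 := by gcongr; exact he p
    _ = ‖b (p.1 + p.2 + k)‖ * t ^ (p.1 + p.2) := by ring

theorem coeffDslope_coeffDslope (ht : 0 < t) (hb : DecaysAt t b) (hα : ‖α‖ ≤ t)
    (hβ : ‖β‖ ≤ t) (k : ℕ) :
    coeffDslope α (coeffDslope β b) k
      = ∑' p : ℕ × ℕ, b (p.1 + p.2 + (k + 2)) * α ^ p.1 * β ^ p.2 := by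
  have hsum := summable_prod_mul_shift (e := 1) (fun _ => norm_one.le) ht hb hα hβ (k + 2)
  simp only [Pi.one_apply, one_mul] at hsum
  rw [hsum.tsum_prod]
  unfold coeffDslope
  refine tsum_congr fun n => ?_
  rw [← tsum_mul_right]
  exact tsum_congr fun m => by rw [show m + (n + (k + 1) + 1) = n + m + (k + 2) by omega]; ring

theorem coeffDslope_comm (ht : 0 < t) (hb : DecaysAt t b) (hα : ‖α‖ ≤ t) (hβ : ‖β‖ ≤ t) :
    coeffDslope α (coeffDslope β b) = coeffDslope β (coeffDslope α b) := by
  funext k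
  rw [coeffDslope_coeffDslope ht hb hα hβ, coeffDslope_coeffDslope ht hb hβ hα,
    ← (Equiv.prodComm ℕ ℕ).tsum_eq]
  refine tsum_congr fun p => ?_
  simp only [Equiv.prodComm_apply, Prod.fst_swap, Prod.snd_swap]
  rw [add_comm p.2 p.1]
  ring

open Finset in
theorem hasseEval_coeffDslope (ht : 0 < t) (hb : DecaysAt t b) (hγ : ‖γ‖ ≤ t) (j : ℕ) :
    hasseEval j (coeffDslope γ b) γ = hasseEval (j + 1) b γ := by
  have hsum := summable_prod_mul_shift (e := fun p => ((p.1 + j).choose j : F))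
    (fun _ => norm_natCast_le_one F _) ht hb hγ hγ (j + 1)
  calc hasseEval j (coeffDslope γ b) γ
      = ∑' p : ℕ × ℕ, ((p.1 + j).choose j : F) * b (p.1 + p.2 + (j + 1)) * γ ^ p.1 * γ ^ p.2 := by
        rw [hsum.tsum_prod]
        refine tsum_congr fun n => ?_
        rw [coeffDslope, ← tsum_mul_left, ← tsum_mul_right]
        exact tsum_congr fun m => by
          rw [show m + (n + j + 1) = n + m + (j + 1) by omega]; ring
    _ = ∑' N, ∑ p ∈ antidiagonal N,
          ((p.1 + j).choose j : F) * b (N + (j + 1)) * γ ^ N := by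
        rw [tsum_prod_eq_tsum_sum_antidiagonal hsum]
        refine tsum_congr fun N => Finset.sum_congr rfl fun p hp => ?_
        rw [mul_assoc _ (γ ^ p.1), ← pow_add, HasAntidiagonal.mem_antidiagonal.1 hp]
    _ = hasseEval (j + 1) b γ := by
        refine tsum_congr fun N => ?_
        rw [← sum_mul, ← sum_mul, Nat.sum_antidiagonal_eq_sum_range_succ_mk,
          ← Nat.cast_sum, Nat.sum_range_add_choose, show N + j + 1 = N + (j + 1) by omega]

theorem evalSeries_iterate_coeffDslope (ht : 0 < t) (hb : DecaysAt t b) (hγ : ‖γ‖ ≤ t) (j : ℕ) :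
    evalSeries ((coeffDslope γ)^[j] b) γ = hasseEval j b γ := by
  induction j generalizing b with
  | zero => simp [hasseEval, evalSeries]
  | succ j ih =>
    rw [Function.iterate_succ_apply, ih (decaysAt_coeffDslope ht hb hγ),
      hasseEval_coeffDslope ht hb hγ]

section DivDiff

variable (ht : 0 < t) (ha : DecaysAt t a) (hx : ∀ i, ‖x i‖ ≤ t)
include ht ha hx

theorem coeffDivDiff_succ' (i j : ℕ) :
    coeffDivDiff a x i (j + 1) = coeffDslope (x i) (coeffDivDiff a x (i + 1) j) := by
  induction j generalizing i with
  | zero => simp [coeffDivDiff]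
  | succ j ih =>
    rw [coeffDivDiff, ih, coeffDslope_comm ht (decaysAt_coeffDivDiff ht ha hx _ _) (hx _) (hx _),
      show i + (j + 1) = i + 1 + j by omega, ← coeffDivDiff]

theorem evalSeries_coeffDivDiff_succ (i j : ℕ) :
    evalSeries (coeffDivDiff a x (i + 1) j) (x i) = divDiff a x i j := by
  cases j with
  | zero => simp [coeffDivDiff, divDiff]
  | succ j =>
    rw [coeffDivDiff, evalSeries_coeffDslope_comm ht (decaysAt_coeffDivDiff ht ha hx _ _) (hx _)
      (hx _), ← coeffDivDiff_succ' ht ha hx, divDiff, show i + 1 + j = i + (j + 1) by omega]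

theorem sub_mul_divDiff_succ (i j : ℕ) :
    (x (i + (j + 1)) - x i) * divDiff a x i (j + 1) = divDiff a x (i + 1) j - divDiff a x i j := by
  have h := evalSeries_sub_evalSeries ht (decaysAt_coeffDivDiff ht ha hx (i + 1) j) (hx i)
    (hx (i + (j + 1)))
  rw [evalSeries_coeffDivDiff_succ ht ha hx, ← coeffDivDiff_succ' ht ha hx] at h
  rw [divDiff, ← h, divDiff.eq_1 a x (i + 1), show i + 1 + j = i + (j + 1) by omega]

theorem divDiff_eq_hasseEval {i j : ℕ} (h : ∀ k ≤ j, x (i + k) = γ) :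
    divDiff a x i j = hasseEval j a γ := by
  rw [divDiff, coeffDivDiff_eq_iterate fun k hk => h k hk.le, h j le_rfl,
    evalSeries_iterate_coeffDslope ht ha (h 0 (Nat.zero_le j) ▸ hx (i + 0)) j]

theorem norm_divDiff_mul_pow_le {N : ℕ} {δ M : ℝ} (hδ : 0 < δ) (hδ1 : δ ≤ 1)
    (hsep : ∀ i j, x i ≠ x j → δ ≤ ‖x i - x j‖)
    (hconf : ∀ i j, i + j < N → x (i + j) = x i → ‖divDiff a x i j‖ ≤ M) (j : ℕ) :
    ∀ i, i + j < N → ‖divDiff a x i j‖ * δ ^ j ≤ M := by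
  induction j with
  | zero => intro i hi; simpa using hconf i 0 hi rfl
  | succ j ih =>
    intro i hi
    by_cases heq : x (i + (j + 1)) = x i
    · exact (mul_le_of_le_one_right (norm_nonneg _) (pow_le_one₀ hδ.le hδ1)).trans
        (hconf i (j + 1) hi heq)
    have hnorm : ‖x (i + (j + 1)) - x i‖ * ‖divDiff a x i (j + 1)‖
        ≤ max ‖divDiff a x (i + 1) j‖ ‖divDiff a x i j‖ := by
      rw [← norm_mul, sub_mul_divDiff_succ ht ha hx]
      exact norm_sub_le_max _ _
    calc ‖divDiff a x i (j + 1)‖ * δ ^ (j + 1)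
        = δ * ‖divDiff a x i (j + 1)‖ * δ ^ j := by ring
      _ ≤ ‖x (i + (j + 1)) - x i‖ * ‖divDiff a x i (j + 1)‖ * δ ^ j := by
          gcongr; exact hsep _ _ heq
      _ ≤ max ‖divDiff a x (i + 1) j‖ ‖divDiff a x i j‖ * δ ^ j := by gcongr
      _ = max (‖divDiff a x (i + 1) j‖ * δ ^ j) (‖divDiff a x i j‖ * δ ^ j) :=
          max_mul_of_nonneg _ _ (by positivity)
      _ ≤ M := max_le (ih (i + 1) (by omega)) (ih i (by omega))

end DivDiff

/-- Coefficientwise form of the Newton expansion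
`f = ∑_{j<N} f[x₀, …, x_j] ∏_{k<j} (X - x_k) + ∏_{k<N} (X - x_k) g`. -/
theorem norm_mul_pow_le_of_divDiff (ht : 0 < t) (ha : DecaysAt t a) (hs : 0 < s) (hst : s ≤ t)
    (hx : ∀ i, ‖x i‖ ≤ s) {N : ℕ} (hG : ∀ n, ‖a n‖ * t ^ n ≤ G)
    (hdd : ∀ j < N, ‖divDiff a x 0 j‖ * s ^ j ≤ B) (hB : G * (s / t) ^ N ≤ B) (n : ℕ) :
    ‖a n‖ * s ^ n ≤ B := by
  have hxt (i : ℕ) : ‖x i‖ ≤ t := (hx i).trans hst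
  have hG0 : 0 ≤ G := (by positivity : 0 ≤ ‖a 0‖ * t ^ 0).trans (hG 0)
  suffices h : ∀ j ≤ N, ∀ n, ‖coeffDivDiff a x 0 j n‖ * s ^ (n + j) ≤ B by
    simpa [coeffDivDiff] using h 0 N.zero_le n
  intro j hj
  induction hj using Nat.decreasingInduction with
  | self =>
    intro n
    calc ‖coeffDivDiff a x 0 N n‖ * s ^ (n + N)
        = ‖coeffDivDiff a x 0 N n‖ * t ^ (n + N) * (s / t) ^ (n + N) := by
          rw [div_pow]; field_simp
      _ ≤ G * (s / t) ^ N :=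
          mul_le_mul (norm_coeffDivDiff_mul_pow_le ht hxt hG 0 N n)
            (pow_le_pow_of_le_one (by positivity) (div_le_one_of_le₀ hst ht.le) (by omega))
            (by positivity) hG0
      _ ≤ B := hB
  | of_succ j hj ih =>
    rw [← mulXSubAdd_coeffDslope ht (decaysAt_coeffDivDiff ht ha hxt 0 j) (hxt (0 + j))]
    exact norm_mulXSubAdd_mul_pow_le hs.le (hx _) ih (hdd j hj)

theorem gaussNorm_le_of_divDiff (ht : 0 < t) (ha : DecaysAt t a) (hs : 0 < s) (hst : s ≤ t)
    (hx : ∀ i, ‖x i‖ ≤ s) {N : ℕ} {δ M : ℝ} (hδ : 0 < δ) (hδ1 : δ ≤ 1) (hδs : δ ≤ s)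
    (hsep : ∀ i j, x i ≠ x j → δ ≤ ‖x i - x j‖)
    (hconf : ∀ i j, i + j < N → x (i + j) = x i → ‖divDiff a x i j‖ ≤ M) :
    gaussNorm a s ≤ max ((s / t) ^ N * gaussNorm a t) (M * (s / δ) ^ (N - 1)) := by
  have hxt (i : ℕ) : ‖x i‖ ≤ t := (hx i).trans hst
  have hG (n : ℕ) : ‖a n‖ * t ^ n ≤ gaussNorm a t := le_ciSup (Tendsto.bddAbove_range ha) n
  have hdd := norm_divDiff_mul_pow_le ht ha hxt hδ hδ1 hsep hconf
  refine ciSup_le fun n => norm_mul_pow_le_of_divDiff ht ha hs hst hx hG (fun j hj => ?_)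
    ((mul_comm _ _).trans_le (le_max_left _ _)) n
  have hM : 0 ≤ M := (mul_nonneg (norm_nonneg _) (pow_nonneg hδ.le 0)).trans (hdd 0 0 (by omega))
  calc ‖divDiff a x 0 j‖ * s ^ j = ‖divDiff a x 0 j‖ * δ ^ j * (s / δ) ^ j := by
        rw [div_pow]; field_simp
    _ ≤ M * (s / δ) ^ (N - 1) :=
        mul_le_mul (hdd j 0 (by omega)) (pow_le_pow_right₀ ((one_le_div hδ).2 hδs) (by omega))
          (by positivity) hM
    _ ≤ _ := le_max_right _ _

end PowerSeries

/-- The `p`-adic Schwarz lemma: `F` is a complete subfield of `ℂ_p` (abstracted as a complete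
nonarchimedean normed field with `‖p‖ = 1/p`), `f = ∑ a_n x^n` is analytic on the closed ball of
radius `t ≥ s > 0`, `Γ` is a finite subset of the closed ball of radius `s` of cardinality
`l ≥ 2`, `δ` is the minimal distance between distinct points of `Γ`, `μ` bounds the first `q`
derivatives of `f` on `Γ`, and `r_p = p^{-1/(p-1)}`.  If `δ ≤ 1` then
`|f|_s ≤ max((s/t)^{ql} |f|_t, μ (s/δ)^{ql-1} r_p^{-(q-1)})`. -/
theorem stmt_2 {p : ℕ} (hp : p.Prime)
    {F : Type*} [NormedField F] [CompleteSpace F] [IsUltrametricDist F]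
    (hpF : ‖(p : F)‖ = (p : ℝ)⁻¹)
    (a : ℕ → F) (t s : ℝ) (hs : 0 < s) (hst : s ≤ t)
    (hconv : Tendsto (fun n => ‖a n‖ * t ^ n) atTop (nhds 0))
    (q : ℕ) (hq : 0 < q)
    (Γ : Finset F) (hΓs : ∀ γ ∈ Γ, ‖γ‖ ≤ s) (hl : 2 ≤ Γ.card)
    (δ μ : ℝ)
    (hδ : δ = sInf {x : ℝ | ∃ γ ∈ Γ, ∃ γ' ∈ Γ, γ ≠ γ' ∧ x = ‖γ - γ'‖})
    (hμ : μ = sSup {x : ℝ | ∃ m, m < q ∧ ∃ γ ∈ Γ, x = ‖pseriesDeriv a m γ‖})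
    (hδ1 : δ ≤ 1) :
    gaussNorm a s ≤ max ((s / t) ^ (q * Γ.card) * gaussNorm a t)
      (μ * (s / δ) ^ (q * Γ.card - 1) * (((p : ℝ) ^ (-(1 : ℝ) / ((p : ℝ) - 1)))⁻¹) ^ (q - 1)) := by
  have ht : 0 < t := hs.trans_le hst
  obtain ⟨γ₀, hγ₀⟩ : Γ.Nonempty := Finset.card_pos.1 (by omega)
  set x := blockNodes Γ.toList q γ₀
  have hxΓ (i : ℕ) : x i ∈ Γ := Finset.mem_toList.1 (blockNodes_mem (Finset.mem_toList.2 hγ₀) q i)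
  have hxs (i : ℕ) : ‖x i‖ ≤ s := hΓs _ (hxΓ i)
  obtain ⟨γ, hγ, γ', hγ', hne, hδγ⟩ := exists_norm_sub_eq_sInf hl
  rw [← hδ] at hδγ
  have hδ0 : 0 < δ := hδγ ▸ norm_pos_iff.2 (sub_ne_zero.2 hne)
  have hδs : δ ≤ s := hδγ ▸ (norm_sub_le_max γ γ').trans (max_le (hΓs γ hγ) (hΓs γ' hγ'))
  set R := (((p : ℝ) ^ (-(1 : ℝ) / ((p : ℝ) - 1)))⁻¹) ^ (q - 1)
  have hconf (i j : ℕ) (hij : i + j < q * Γ.card) (hx : x (i + j) = x i) :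
      ‖divDiff a x i j‖ ≤ μ * R := by
    obtain ⟨hjq, hconst⟩ :=
      blockNodes_window Γ.nodup_toList hq (by rwa [Finset.length_toList]) hx
    rw [divDiff_eq_hasseEval ht hconv (fun i => (hxs i).trans hst) hconst]
    refine (norm_hasseEval_le hp hpF hjq a (x i)).trans
      (mul_le_mul_of_nonneg_right ?_ (by positivity))
    rw [hμ]
    exact le_sSup_of_lt_of_mem (fun m γ => ‖pseriesDeriv a m γ‖) hjq (hxΓ i)
  calc gaussNorm a s ≤ max ((s / t) ^ (q * Γ.card) * gaussNorm a t)
        (μ * R * (s / δ) ^ (q * Γ.card - 1)) :=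
      gaussNorm_le_of_divDiff ht hconv hs hst hxs hδ0 hδ1 hδs
        (fun i j hne => hδ ▸ sInf_norm_sub_le (hxΓ i) (hxΓ j) hne) hconf
    _ = _ := by rw [mul_right_comm μ R]
end

section
/- Let G be a commutative algebraic group over \bar{ℚ}, F a complete subfield of ℂ_p containing \bar{ℚ}, and φ: X → G a homomorphism of commutative algebraic groups over \bar{ℚ} with induced map φ_F: X(F) → G(F) and tangent map φ_*. Assume the p-adic analytic subgroup theorem. If x ∈ X(F) is such that φ_F(x) is a non-torsion point of G_f(\bar{ℚ}), then there exists an algebraic subgroup H ⊆ G of positive dimension over \bar{ℚ} with φ_F(x) ∈ H and Lie(H) ⊆ φ_*(Lie(X)). -/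
open TensorProduct

/-- Corollary 2.2 from the `p`-adic analytic subgroup theorem.  `k` plays the role of `ℚ̄`, `F`
of a complete subfield of `ℂ_p` containing `ℚ̄`; `X`, `G` are the groups of `F`-points of
commutative algebraic groups over `k` with Lie algebras `𝔵`, `𝔤` (`dim G > 0`, expressed by
`Nontrivial 𝔤`); `A` indexes the algebraic subgroups of `G` over `k`, with points `pts` and Lie
algebras `lie`; `Gf` is `G_f(ℚ̄)`; `φ` is the map on points induced by an algebraic homomorphism
with tangent map `φs`, and the logarithms satisfy functoriality (`hfunct`) and vanish exactly on
torsion (`hlogtor` gives one direction).  Assuming the analytic subgroup theorem `hAST`, if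
`φ(x)` is a non-torsion point of `G_f(ℚ̄)`, there is an algebraic subgroup `H` of positive
dimension with `φ(x) ∈ H` and `Lie(H) ⊆ φ_*(Lie(X))`. -/
theorem stmt_11 {k F : Type*} [Field k] [CharZero k] [Field F] [Algebra k F]
    {X G : Type*} [CommGroup X] [CommGroup G]
    {𝔵 : Type*} [AddCommGroup 𝔵] [Module k 𝔵] [FiniteDimensional k 𝔵]
    {𝔤 : Type*} [AddCommGroup 𝔤] [Module k 𝔤] [FiniteDimensional k 𝔤] [Nontrivial 𝔤]
    {A : Type*} (pts : A → Subgroup G) (lie : A → Submodule k 𝔤)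
    (Gf : Subgroup G) (logX : X → F ⊗[k] 𝔵) (logG : G → F ⊗[k] 𝔤)
    (ι : 𝔤 →ₗ[k] F ⊗[k] 𝔤) (hι : ∀ v : 𝔤, ι v = (1 : F) ⊗ₜ[k] v)
    (φ : X →* G) (φs : 𝔵 →ₗ[k] 𝔤)
    (hfunct : ∀ x : X, logG (φ x) = LinearMap.lTensor F φs (logX x))
    (hlogtor : ∀ γ ∈ Gf, logG γ = 0 → ∃ m : ℕ, 0 < m ∧ γ ^ m = 1)
    (hAST : ∀ V : Submodule k 𝔤, V ≠ ⊥ → ∀ γ ∈ Gf, logG γ ≠ 0 →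
      logG γ ∈ Submodule.span F (ι '' (V : Set 𝔤)) →
      ∃ H : A, lie H ≠ ⊥ ∧ lie H ≤ V ∧ γ ∈ pts H)
    (x : X) (hx : φ x ∈ Gf) (hnt : ∀ m : ℕ, 0 < m → (φ x) ^ m ≠ 1) :
    ∃ H : A, lie H ≠ ⊥ ∧ φ x ∈ pts H ∧ lie H ≤ LinearMap.range φs := by
  have hlog0 : logG (φ x) ≠ 0 := by
    intro h0
    obtain ⟨m, hm, hm1⟩ := hlogtor (φ x) hx h0
    exact hnt m hm hm1
  have hmem : logG (φ x) ∈ Submodule.span F (ι '' ((LinearMap.range φs : Submodule k 𝔤) : Set 𝔤)) := by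
    rw [hfunct]
    induction logX x using TensorProduct.induction_on with
    | zero => simp
    | tmul f v =>
      rw [LinearMap.lTensor_tmul]
      have : (f : F) ⊗ₜ[k] (φs v) = f • ((1 : F) ⊗ₜ[k] (φs v)) := by
        rw [TensorProduct.smul_tmul', smul_eq_mul, mul_one]
      rw [this, ← hι]
      exact Submodule.smul_mem _ _ (Submodule.subset_span ⟨φs v, ⟨v, rfl⟩, rfl⟩)
    | add a b ha hb =>
      rw [map_add]; exact Submodule.add_mem _ ha hb
  have hVne : (LinearMap.range φs : Submodule k 𝔤) ≠ ⊥ := by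
    intro hbot
    apply hlog0
    rw [hfunct]
    have : φs = 0 := LinearMap.range_eq_bot.mp hbot
    rw [this, LinearMap.lTensor_zero, LinearMap.zero_apply]
  obtain ⟨H, h1, h2, h3⟩ := hAST _ hVne (φ x) hx hlog0 hmem
  exact ⟨H, h1, h3, h2⟩
end
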